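/- Every solvable unification problem U (a finite set of pairs of terms) over a signature Σ has a most general unifier: there is a unifier σ̂ of U such that for every unifier σ of U there exists a substitution σ' with σ(x) = [σ̂(x)]σ' for all variables x. -/

import Mathlib

/-- First-order terms over variables `V` and a signature given by function symbols
`I` with arities `ar`. -/
inductive Tm (V I : Type*) (ar : I → ℕ) : Type _
  | var : V → Tm V I ar
  | app : (i : I) → (Fin (ar i) → Tm V I ar) → Tm V I ar

/-- Application of a substitution to a term. -/
def substT {V I : Type*} {ar : I → ℕ} (σ : V → Tm V I ar) : Tm V I ar → Tm V I ar
  | .var x => σ x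
  | .app i args => .app i (fun j => substT σ (args j))

set_option linter.unusedSectionVars false

namespace MguAux

variable {V I : Type*} {ar : I → ℕ}

def comp (σ τ : V → Tm V I ar) : V → Tm V I ar := fun x => substT σ (τ x)

lemma substT_substT (σ τ : V → Tm V I ar) (s : Tm V I ar) :
    substT σ (substT τ s) = substT (comp σ τ) s := by
  induction s with
  | var x => rfl
  | app i f ih => simp only [substT]; exact congrArg _ (funext ih)

lemma substT_congr {σ₁ σ₂ : V → Tm V I ar} (h : ∀ x, σ₁ x = σ₂ x) (s : Tm V I ar) :
    substT σ₁ s = substT σ₂ s := by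
  induction s with
  | var x => exact h x
  | app i f ih => simp only [substT]; exact congrArg _ (funext ih)

variable [DecidableEq V]

noncomputable def vars : Tm V I ar → Finset V
  | .var x => {x}
  | .app _ f => Finset.univ.biUnion fun j => vars (f j)

def tsize : Tm V I ar → ℕ
  | .var _ => 1
  | .app _ f => 1 + ∑ j, tsize (f j)

lemma tsize_pos (s : Tm V I ar) : 1 ≤ tsize s := by
  cases s <;> simp [tsize]

lemma mem_vars_substT (σ : V → Tm V I ar) (s : Tm V I ar) (y : V) :
    y ∈ vars (substT σ s) ↔ ∃ z ∈ vars s, y ∈ vars (σ z) := by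
  induction s with
  | var x => simp [vars, substT]
  | app i f ih =>
      simp only [substT, vars, Finset.mem_biUnion, Finset.mem_univ, true_and]
      constructor
      · rintro ⟨j, hj⟩
        obtain ⟨z, hz, hy⟩ := (ih j).1 hj
        exact ⟨z, ⟨j, hz⟩, hy⟩
      · rintro ⟨z, ⟨j, hz⟩, hy⟩
        exact ⟨j, (ih j).2 ⟨z, hz, hy⟩⟩

lemma substT_eq_self {σ : V → Tm V I ar} {s : Tm V I ar}
    (h : ∀ y ∈ vars s, σ y = .var y) : substT σ s = s := by
  induction s with
  | var x => exact h x (by simp [vars])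
  | app i f ih =>
      simp only [substT]
      refine congrArg _ (funext fun j => ih j fun y hy => h y ?_)
      simp only [vars, Finset.mem_biUnion, Finset.mem_univ, true_and]
      exact ⟨j, hy⟩

lemma tsize_le_substT {x : V} {s : Tm V I ar} (h : x ∈ vars s) (σ : V → Tm V I ar) :
    tsize (σ x) ≤ tsize (substT σ s) := by
  induction s with
  | var y => simp only [vars, Finset.mem_singleton] at h; subst h; exact le_rfl
  | app i f ih =>
      simp only [vars, Finset.mem_biUnion, Finset.mem_univ, true_and] at h
      obtain ⟨j, hj⟩ := h
      calc tsize (σ x) ≤ tsize (substT σ (f j)) := ih j hj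
        _ ≤ ∑ k, tsize (substT σ (f k)) :=
            Finset.single_le_sum (f := fun k => tsize (substT σ (f k))) (fun _ _ => Nat.zero_le _) (Finset.mem_univ j)
        _ ≤ tsize (substT σ (.app i f)) := by simp [substT, tsize]

lemma no_unifier {x : V} {i : I} {f : Fin (ar i) → Tm V I ar}
    (hocc : x ∈ vars (Tm.app i f)) (σ : V → Tm V I ar) :
    σ x ≠ substT σ (Tm.app i f) := by
  intro h
  have h1 : tsize (σ x) < tsize (substT σ (Tm.app i f)) := by
    simp only [vars, Finset.mem_biUnion, Finset.mem_univ, true_and] at hocc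
    obtain ⟨j, hj⟩ := hocc
    calc tsize (σ x) ≤ tsize (substT σ (f j)) := tsize_le_substT hj σ
      _ ≤ ∑ k, tsize (substT σ (f k)) :=
          Finset.single_le_sum (f := fun k => tsize (substT σ (f k))) (fun _ _ => Nat.zero_le _) (Finset.mem_univ j)
      _ < tsize (substT σ (.app i f)) := by simp [substT, tsize]
  rw [h] at h1; exact lt_irrefl _ h1

end MguAux

namespace MguAux
variable {V I : Type*} {ar : I → ℕ} [DecidableEq V]

def UL (σ : V → Tm V I ar) (L : List (Tm V I ar × Tm V I ar)) : Prop :=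
  ∀ p ∈ L, substT σ p.1 = substT σ p.2

noncomputable def varsL : List (Tm V I ar × Tm V I ar) → Finset V
  | [] => ∅
  | p :: L => vars p.1 ∪ vars p.2 ∪ varsL L

def sizeL (L : List (Tm V I ar × Tm V I ar)) : ℕ :=
  (L.map fun p => tsize p.1 + tsize p.2).sum

def IsMgu (σhat : V → Tm V I ar) (L : List (Tm V I ar × Tm V I ar)) : Prop :=
  UL σhat L ∧ ∀ σ, UL σ L → ∃ σ', ∀ x, σ x = substT σ' (σhat x)

lemma IsMgu_congr {L₁ L₂ : List (Tm V I ar × Tm V I ar)}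
    (h : ∀ σ, UL σ L₁ ↔ UL σ L₂) {σhat} (hm : IsMgu σhat L₁) : IsMgu σhat L₂ :=
  ⟨(h σhat).1 hm.1, fun σ hσ => hm.2 σ ((h σ).2 hσ)⟩

noncomputable def single (x : V) (t : Tm V I ar) : V → Tm V I ar :=
  fun y => if y = x then t else .var y

def mapS (τ : V → Tm V I ar) (L : List (Tm V I ar × Tm V I ar)) :
    List (Tm V I ar × Tm V I ar) :=
  L.map fun p => (substT τ p.1, substT τ p.2)

lemma UL_mapS {σ τ : V → Tm V I ar} {L} (h : ∀ y, substT σ (τ y) = σ y) :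
    UL σ (mapS τ L) ↔ UL σ L := by
  have e : ∀ s : Tm V I ar, substT σ (substT τ s) = substT σ s := fun s => by
    rw [substT_substT]; exact substT_congr h s
  constructor
  · intro hσ p hp
    have := hσ (substT τ p.1, substT τ p.2) (List.mem_map.2 ⟨p, hp, rfl⟩)
    simpa only [e] using this
  · intro hσ p hp
    obtain ⟨q, hq, rfl⟩ := List.mem_map.1 hp
    simp only [e]
    exact hσ q hq

lemma mem_varsL {L : List (Tm V I ar × Tm V I ar)} {y : V} :
    y ∈ varsL L ↔ ∃ p ∈ L, y ∈ vars p.1 ∨ y ∈ vars p.2 := by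
  induction L with
  | nil => simp [varsL]
  | cons p L ih => simp [varsL, ih, Finset.mem_union, or_assoc]

/-- Key step: if σhat' is an mgu of `mapS (single x t) L` and `x ∉ vars t`,
then `comp σhat' (single x t)` is an mgu of `(var x, t) :: L`. -/
lemma elim_step {x : V} {t : Tm V I ar} (hocc : x ∉ vars t)
    {L : List (Tm V I ar × Tm V I ar)} {σhat' : V → Tm V I ar}
    (h : IsMgu σhat' (mapS (single x t) L)) :
    IsMgu (comp σhat' (single x t)) ((Tm.var x, t) :: L) := by
  have hself : substT (single x t) t = t :=
    substT_eq_self fun y hy => by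
      have hne : y ≠ x := fun hyx => hocc (by rw [← hyx]; exact hy)
      simp [single, hne]
  have hcomp : ∀ s, substT (comp σhat' (single x t)) s
      = substT σhat' (substT (single x t) s) := fun s => (substT_substT _ _ s).symm
  constructor
  · intro p hp
    rcases List.mem_cons.1 hp with rfl | hp
    · show substT (comp σhat' (single x t)) (.var x) = _
      rw [hcomp, hcomp]
      show substT σhat' (single x t x) = _
      simp [single, hself]
    · rw [hcomp, hcomp]
      exact h.1 _ (List.mem_map.2 ⟨p, hp, rfl⟩)
  · intro σ hσ
    have hx : σ x = substT σ t := hσ (Tm.var x, t) (List.mem_cons_self)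
    have hfix : ∀ y, substT σ (single x t y) = σ y := by
      intro y
      by_cases hy : y = x
      · subst hy; simp [single, hx]
      · simp [single, hy, substT]
    have hσ' : UL σ (mapS (single x t) L) :=
      (UL_mapS hfix).2 fun p hp => hσ p (List.mem_cons_of_mem _ hp)
    obtain ⟨σ', hσ'2⟩ := h.2 σ hσ'
    refine ⟨σ', fun y => ?_⟩
    have h1 : substT σ' (comp σhat' (single x t) y)
        = substT (comp σ' σhat') (single x t y) := substT_substT _ _ _
    calc σ y = substT σ (single x t y) := (hfix y).symm
      _ = substT (comp σ' σhat') (single x t y) := substT_congr hσ'2 _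
      _ = substT σ' (comp σhat' (single x t) y) := h1.symm

lemma varsL_mapS_single {x : V} {t : Tm V I ar} (hocc : x ∉ vars t)
    (L : List (Tm V I ar × Tm V I ar)) :
    varsL (mapS (single x t) L) ⊆ ((varsL L ∪ vars t).erase x) := by
  intro y hy
  rw [mem_varsL] at hy
  obtain ⟨p, hp, hy⟩ := hy
  obtain ⟨q, hq, rfl⟩ := List.mem_map.1 hp
  have key : ∀ s : Tm V I ar, y ∈ vars (substT (single x t) s) →
      y ≠ x ∧ (y ∈ vars s ∨ y ∈ vars t) := by
    intro s hs
    rw [mem_vars_substT] at hs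
    obtain ⟨z, hz, hyz⟩ := hs
    by_cases hzx : z = x
    · subst hzx
      simp only [single, if_pos rfl] at hyz
      exact ⟨fun hyx => hocc (by rw [← hyx]; exact hyz), Or.inr hyz⟩
    · simp only [single, if_neg hzx, vars, Finset.mem_singleton] at hyz
      subst hyz
      exact ⟨hzx, Or.inl hz⟩
  rcases hy with hy | hy
  · obtain ⟨hne, hmem⟩ := key _ hy
    refine Finset.mem_erase.2 ⟨hne, ?_⟩
    rcases hmem with h | h
    · exact Finset.mem_union_left _ (mem_varsL.2 ⟨q, hq, Or.inl h⟩)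
    · exact Finset.mem_union_right _ h
  · obtain ⟨hne, hmem⟩ := key _ hy
    refine Finset.mem_erase.2 ⟨hne, ?_⟩
    rcases hmem with h | h
    · exact Finset.mem_union_left _ (mem_varsL.2 ⟨q, hq, Or.inr h⟩)
    · exact Finset.mem_union_right _ h

end MguAux

namespace MguAux
variable {V I : Type*} {ar : I → ℕ} [DecidableEq V]

lemma varsL_cons_subset {p : Tm V I ar × Tm V I ar} {L} :
    varsL L ⊆ varsL (p :: L) := by
  intro y hy; rw [mem_varsL] at hy ⊢
  obtain ⟨q, hq, h⟩ := hy; exact ⟨q, List.mem_cons_of_mem _ hq, h⟩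

lemma sizeL_cons (a b : Tm V I ar) (L) :
    sizeL ((a, b) :: L) = tsize a + tsize b + sizeL L := by
  simp [sizeL, add_assoc]

lemma main : ∀ n m (L : List (Tm V I ar × Tm V I ar)),
    (varsL L).card ≤ n → sizeL L ≤ m → (∃ σ, UL σ L) → ∃ σhat, IsMgu σhat L := by
  intro n
  induction n using Nat.strong_induction_on with
  | _ n ihn =>
  intro m
  induction m using Nat.strong_induction_on with
  | _ m ihm =>
  intro L hn hm hsolv
  cases L with
  | nil =>
      exact ⟨Tm.var, fun p hp => absurd hp List.not_mem_nil,
        fun σ _ => ⟨σ, fun x => rfl⟩⟩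
  | cons p L =>
  obtain ⟨s, t⟩ := p
  obtain ⟨σ₀, hσ₀⟩ := hsolv
  have hhead : substT σ₀ s = substT σ₀ t := hσ₀ _ (List.mem_cons_self)
  have htail : UL σ₀ L := fun q hq => hσ₀ q (List.mem_cons_of_mem _ hq)
  by_cases hst : s = t
  · -- trivial pair: drop it
    subst hst
    have hszlt : sizeL L < m := by
      have := tsize_pos s
      have h2 := sizeL_cons s s L
      omega
    obtain ⟨σhat, hmgu⟩ := ihm (sizeL L) hszlt L
      (le_trans (Finset.card_le_card varsL_cons_subset) hn) le_rfl ⟨σ₀, htail⟩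
    refine ⟨σhat, IsMgu_congr (L₁ := L) (fun σ => ?_) hmgu⟩
    constructor
    · intro hσ q hq
      rcases List.mem_cons.1 hq with rfl | hq
      · rfl
      · exact hσ q hq
    · intro hσ q hq; exact hσ q (List.mem_cons_of_mem _ hq)
  · -- elimination helper, used for both (var x, t) and (s, var y)
    have elim : ∀ (x : V) (u : Tm V I ar), x ∉ vars u → σ₀ x = substT σ₀ u →
        (vars u ⊆ varsL ((s, t) :: L)) → (x ∈ varsL ((s, t) :: L)) →
        ∃ σhat, IsMgu σhat ((Tm.var x, u) :: L) := by
      intro x u hocc hx0 husub hxmem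
      have hfix : ∀ y, substT σ₀ (single x u y) = σ₀ y := by
        intro y
        by_cases hy : y = x
        · subst hy; simp [single, hx0]
        · simp [single, hy, substT]
      have hsolv' : ∃ σ, UL σ (mapS (single x u) L) := ⟨σ₀, (UL_mapS hfix).2 htail⟩
      have hsubset : varsL (mapS (single x u) L) ⊆ (varsL ((s, t) :: L)).erase x := by
        refine (varsL_mapS_single hocc L).trans ?_
        intro y hy
        rw [Finset.mem_erase] at hy ⊢
        refine ⟨hy.1, ?_⟩
        rcases Finset.mem_union.1 hy.2 with h | h
        · exact varsL_cons_subset h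
        · exact husub h
      have hcard : (varsL (mapS (single x u) L)).card < n := by
        calc (varsL (mapS (single x u) L)).card
            ≤ ((varsL ((s, t) :: L)).erase x).card := Finset.card_le_card hsubset
          _ < (varsL ((s, t) :: L)).card := Finset.card_erase_lt_of_mem hxmem
          _ ≤ n := hn
      obtain ⟨σhat', hmgu'⟩ := ihn _ hcard (sizeL (mapS (single x u) L)) _ le_rfl le_rfl hsolv'
      exact ⟨_, elim_step hocc hmgu'⟩
    cases s with
    | var x =>
        cases t with
        | var y =>
            have hxy : x ≠ y := fun h => hst (by rw [h])
            have hocc : x ∉ vars (Tm.var y : Tm V I ar) := by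
              simp [vars, hxy]
            exact elim x (Tm.var y) hocc hhead
              (by intro z hz; rw [mem_varsL]; exact ⟨_, List.mem_cons_self, Or.inr hz⟩)
              (by rw [mem_varsL]; exact ⟨_, List.mem_cons_self, Or.inl (by simp [vars])⟩)
        | app i' g =>
            by_cases hocc : x ∈ vars (Tm.app i' g)
            · exact absurd hhead (no_unifier hocc σ₀)
            · exact elim x (Tm.app i' g) hocc hhead
                (by intro z hz; rw [mem_varsL]; exact ⟨_, List.mem_cons_self, Or.inr hz⟩)
                (by rw [mem_varsL]; exact ⟨_, List.mem_cons_self, Or.inl (by simp [vars])⟩)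
    | app i f =>
        cases t with
        | var y =>
            have hswap : ∀ σ : V → Tm V I ar,
                UL σ ((Tm.var y, Tm.app i f) :: L) ↔ UL σ ((Tm.app i f, Tm.var y) :: L) := by
              intro σ
              constructor <;> intro hσ q hq <;> rcases List.mem_cons.1 hq with rfl | hq
              · exact (hσ _ (List.mem_cons_self)).symm
              · exact hσ q (List.mem_cons_of_mem _ hq)
              · exact (hσ _ (List.mem_cons_self)).symm
              · exact hσ q (List.mem_cons_of_mem _ hq)
            by_cases hocc : y ∈ vars (Tm.app i f)
            · exact absurd hhead.symm (no_unifier hocc σ₀)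
            · obtain ⟨σhat, hmgu⟩ := elim y (Tm.app i f) hocc hhead.symm
                (by intro z hz; rw [mem_varsL]; exact ⟨_, List.mem_cons_self, Or.inl hz⟩)
                (by rw [mem_varsL]; exact ⟨_, List.mem_cons_self, Or.inr (by simp [vars])⟩)
              exact ⟨σhat, IsMgu_congr hswap hmgu⟩
        | app i' g =>
            -- decomposition
            have hii : i = i' := by
              simp only [substT] at hhead
              injection hhead
            subst hii
            set L' := (List.ofFn fun j => (f j, g j)) ++ L with hL'
            have hequiv : ∀ σ : V → Tm V I ar,
                UL σ L' ↔ UL σ ((Tm.app i f, Tm.app i g) :: L) := by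
              intro σ
              constructor
              · intro hσ q hq
                rcases List.mem_cons.1 hq with rfl | hq
                · show Tm.app i _ = Tm.app i _
                  refine congrArg _ (funext fun j => ?_)
                  exact hσ (f j, g j)
                    (List.mem_append_left _ (List.mem_ofFn.2 ⟨j, rfl⟩))
                · exact hσ q (List.mem_append_right _ hq)
              · intro hσ q hq
                rcases List.mem_append.1 hq with hq | hq
                · obtain ⟨j, hj⟩ := List.mem_ofFn.1 hq
                  have hh := hσ _ (List.mem_cons_self)
                  simp only [substT] at hh
                  injection hh with _ h2
                  subst hj
                  exact congrFun h2 j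
                · exact hσ q (List.mem_cons_of_mem _ hq)
            have hvars : varsL L' ⊆ varsL ((Tm.app i f, Tm.app i g) :: L) := by
              intro y hy
              rw [mem_varsL] at hy ⊢
              obtain ⟨q, hq, h⟩ := hy
              rcases List.mem_append.1 hq with hq | hq
              · obtain ⟨j, hj⟩ := List.mem_ofFn.1 hq
                refine ⟨(Tm.app i f, Tm.app i g), List.mem_cons_self, ?_⟩
                subst hj
                simp only [] at h
                have hf : ∀ (h' : Fin (ar i) → Tm V I ar),
                    y ∈ vars (h' j) → y ∈ vars (Tm.app i h') := by
                  intro h' hy'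
                  simp only [vars, Finset.mem_biUnion, Finset.mem_univ, true_and]
                  exact ⟨j, hy'⟩
                rcases h with h | h
                · exact Or.inl (hf f h)
                · exact Or.inr (hf g h)
              · exact ⟨q, List.mem_cons_of_mem _ hq, h⟩
            have hsize : sizeL L' < sizeL ((Tm.app i f, Tm.app i g) :: L) := by
              have h1 : sizeL L' = (∑ j, (tsize (f j) + tsize (g j))) + sizeL L := by
                simp [hL', sizeL, List.sum_ofFn]
              have h2 : sizeL ((Tm.app i f, Tm.app i g) :: L)
                  = (1 + ∑ j, tsize (f j)) + (1 + ∑ j, tsize (g j)) + sizeL L := by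
                rw [sizeL_cons]; simp [tsize]
              rw [h1, h2, Finset.sum_add_distrib]
              omega
            obtain ⟨σhat, hmgu⟩ := ihm (sizeL L') (lt_of_lt_of_le hsize hm) L'
              (le_trans (Finset.card_le_card hvars) hn) le_rfl
              ⟨σ₀, (hequiv σ₀).2 hσ₀⟩
            exact ⟨σhat, IsMgu_congr hequiv hmgu⟩

end MguAux

/-- σ unifies a unification problem U if it makes both components of every pair equal. -/
def Unifies {V I : Type*} {ar : I → ℕ} (σ : V → Tm V I ar)
    (U : Set (Tm V I ar × Tm V I ar)) : Prop :=
  ∀ e ∈ U, substT σ e.1 = substT σ e.2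

/-- Every solvable (finite) unification problem has a most general unifier. -/
theorem stmt13 {V I : Type*} {ar : I → ℕ} [Countable V]
    (U : Set (Tm V I ar × Tm V I ar)) (hfin : U.Finite)
    (hsolv : ∃ σ, Unifies σ U) :
    ∃ σhat : V → Tm V I ar, Unifies σhat U ∧
      ∀ σ : V → Tm V I ar, Unifies σ U →
        ∃ σ' : V → Tm V I ar, ∀ x, σ x = substT σ' (σhat x) := by
  classical
  set L := hfin.toFinset.toList with hL
  have hmem : ∀ p, p ∈ L ↔ p ∈ U := by
    intro p
    rw [hL, Finset.mem_toList, Set.Finite.mem_toFinset]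
  have hiff : ∀ σ : V → Tm V I ar, MguAux.UL σ L ↔ Unifies σ U := by
    intro σ
    constructor
    · intro h p hp; exact h p ((hmem p).2 hp)
    · intro h p hp; exact h p ((hmem p).1 hp)
  obtain ⟨σ₀, hσ₀⟩ := hsolv
  obtain ⟨σhat, hmgu⟩ := MguAux.main (MguAux.varsL L).card (MguAux.sizeL L) L
    le_rfl le_rfl ⟨σ₀, (hiff σ₀).2 hσ₀⟩
  exact ⟨σhat, (hiff σhat).1 hmgu.1, fun σ hσ => hmgu.2 σ ((hiff σ).2 hσ)⟩
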